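/- Let h₁, …, hₙ : ℝ → ℝ be continuous and bounded above by affine functions and x₀ ∈ ℝ. Define d★ as the infimum of φ₁(x₀) over all tuples (φ₁,…,φₙ) of concave functions ℝ → ℝ satisfying φₙ ≥ hₙ and φₖ ≥ hₖ + φₖ₊₁ pointwise for k < n. Then d★ is attained and equals φ₁★(x₀), where φ₁★ is defined by iterated concave envelopes: φₙ★ = concave envelope of hₙ, φₖ★ = concave envelope of (hₖ + φₖ₊₁★). -/

import Mathlib

/-! Each `φₖ★` is concave because `hₖ + φₖ₊₁★` lies below the concave function
`αₖ + βₖ x + φₖ₊₁★`, so the envelope is a genuine concave majorant and `φ★` is admissible.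
Conversely, for an admissible `φ`, downward induction gives `φₖ★ ≤ φₖ`: `φₖ` is a concave
majorant of `hₖ + φₖ₊₁ ≥ hₖ + φₖ₊₁★`, and an envelope lies below every concave majorant. -/

/-- The concave envelope of `h`: the pointwise infimum of all concave functions dominating `h`. -/
noncomputable def concaveEnvelope (h : ℝ → ℝ) : ℝ → ℝ := fun x =>
  sInf {v : ℝ | ∃ g : ℝ → ℝ, ConcaveOn ℝ Set.univ g ∧ (∀ z, h z ≤ g z) ∧ g x = v}

open Set

lemma concaveOn_affine (a b : ℝ) : ConcaveOn ℝ univ (fun x : ℝ => a + b * x) :=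
  (concaveOn_const a convex_univ).add ((LinearMap.mul ℝ ℝ b).concaveOn convex_univ)

section ConcaveEnvelope

variable {h g : ℝ → ℝ}

lemma mem_lowerBounds_concaveEnvelope_set (x : ℝ) :
    h x ∈ lowerBounds {v | ∃ g : ℝ → ℝ, ConcaveOn ℝ univ g ∧ (∀ z, h z ≤ g z) ∧ g x = v} := by
  rintro _ ⟨g, -, hhg, rfl⟩
  exact hhg x

lemma concaveEnvelope_le (hg : ConcaveOn ℝ univ g) (hhg : ∀ z, h z ≤ g z) (x : ℝ) :
    concaveEnvelope h x ≤ g x :=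
  csInf_le ⟨h x, mem_lowerBounds_concaveEnvelope_set x⟩ ⟨g, hg, hhg, rfl⟩

/-- Without a concave majorant the defining set is empty and `sInf ∅ = 0` in `ℝ`. -/
lemma le_concaveEnvelope (hg : ConcaveOn ℝ univ g) (hhg : ∀ z, h z ≤ g z) (x : ℝ) :
    h x ≤ concaveEnvelope h x :=
  le_csInf ⟨g x, g, hg, hhg, rfl⟩ (mem_lowerBounds_concaveEnvelope_set x)

lemma concaveOn_concaveEnvelope (hg : ConcaveOn ℝ univ g) (hhg : ∀ z, h z ≤ g z) :
    ConcaveOn ℝ univ (concaveEnvelope h) := by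
  refine ⟨convex_univ, fun x _ y _ s t hs ht hst => ?_⟩
  refine le_csInf ⟨_, g, hg, hhg, rfl⟩ ?_
  rintro _ ⟨g', hg', hhg', rfl⟩
  calc s • concaveEnvelope h x + t • concaveEnvelope h y
      ≤ s • g' x + t • g' y := by
        gcongr <;> exact concaveEnvelope_le hg' hhg' _
    _ ≤ g' (s • x + t • y) := hg'.2 trivial trivial hs ht hst

variable {a b : ℝ}

lemma le_concaveEnvelope_add (hh : ∀ x, h x ≤ a + b * x) (hg : ConcaveOn ℝ univ g) (x : ℝ) :
    h x + g x ≤ concaveEnvelope (fun y => h y + g y) x :=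
  le_concaveEnvelope (h := fun y => h y + g y) ((concaveOn_affine a b).add hg)
    (fun z => add_le_add_left (hh z) (g z)) x

lemma concaveOn_concaveEnvelope_add (hh : ∀ x, h x ≤ a + b * x) (hg : ConcaveOn ℝ univ g) :
    ConcaveOn ℝ univ (concaveEnvelope fun y => h y + g y) :=
  concaveOn_concaveEnvelope ((concaveOn_affine a b).add hg) (fun z => add_le_add_left (hh z) (g z))

end ConcaveEnvelope

def IsAdmissible (n : ℕ) (h φ : ℕ → ℝ → ℝ) : Prop :=
  (∀ k, 1 ≤ k → k ≤ n → ConcaveOn ℝ univ (φ k)) ∧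
  (∀ y, h n y ≤ φ n y) ∧
  (∀ k, 1 ≤ k → k < n → ∀ y, h k y + φ (k + 1) y ≤ φ k y)

section IteratedEnvelope

variable {n : ℕ} {h φs : ℕ → ℝ → ℝ}

lemma isAdmissible_iterated_concaveEnvelope (hn : 1 ≤ n) (α β : ℕ → ℝ)
    (hb : ∀ k, 1 ≤ k → k ≤ n → ∀ x, h k x ≤ α k + β k * x)
    (hφn : φs n = concaveEnvelope (h n))
    (hφk : ∀ k, 1 ≤ k → k < n → φs k = concaveEnvelope (fun y => h k y + φs (k + 1) y)) :
    IsAdmissible n h φs := by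
  have hconc : ∀ k ≤ n, 1 ≤ k → ConcaveOn ℝ univ (φs k) := by
    intro k hk
    induction hk using Nat.decreasingInduction with
    | self =>
      exact fun hn => hφn ▸ concaveOn_concaveEnvelope (concaveOn_affine _ _) (hb n hn le_rfl)
    | of_succ k hkn ih =>
      intro hk
      rw [hφk k hk hkn]
      exact concaveOn_concaveEnvelope_add (hb k hk hkn.le) (ih (by omega))
  refine ⟨fun k hk hkn => hconc k hkn hk, fun y => ?_, fun k hk hkn y => ?_⟩
  · rw [hφn]
    exact le_concaveEnvelope (concaveOn_affine _ _) (hb n hn le_rfl) y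
  · rw [hφk k hk hkn]
    exact le_concaveEnvelope_add (hb k hk hkn.le) (hconc (k + 1) hkn (by omega)) y

lemma iterated_concaveEnvelope_le_of_isAdmissible {φ : ℕ → ℝ → ℝ}
    (hφn : φs n = concaveEnvelope (h n))
    (hφk : ∀ k, 1 ≤ k → k < n → φs k = concaveEnvelope (fun y => h k y + φs (k + 1) y))
    (hφ : IsAdmissible n h φ) : ∀ k ≤ n, 1 ≤ k → ∀ y, φs k y ≤ φ k y := by
  obtain ⟨hconc, hφ_top, hφ_step⟩ := hφ
  intro k hk
  induction hk using Nat.decreasingInduction with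
  | self => exact fun hn => hφn ▸ concaveEnvelope_le (hconc n hn le_rfl) hφ_top
  | of_succ k hkn ih =>
    intro hk
    rw [hφk k hk hkn]
    refine concaveEnvelope_le (hconc k hk hkn.le) fun z => ?_
    linarith [ih (by omega) z, hφ_step k hk hkn z]

end IteratedEnvelope

theorem dual_attained_eq_iterated_concave_envelope_general (n : ℕ) (hn : 1 ≤ n)
    (h : ℕ → ℝ → ℝ)
    (α β : ℕ → ℝ) (hb : ∀ k, 1 ≤ k → k ≤ n → ∀ x, h k x ≤ α k + β k * x)
    (φs : ℕ → ℝ → ℝ) (hφn : φs n = concaveEnvelope (h n))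
    (hφk : ∀ k, 1 ≤ k → k < n → φs k = concaveEnvelope (fun y => h k y + φs (k + 1) y))
    (x₀ : ℝ) :
    IsLeast {r : ℝ | ∃ φ : ℕ → ℝ → ℝ,
        (∀ k, 1 ≤ k → k ≤ n → ConcaveOn ℝ Set.univ (φ k)) ∧
        (∀ y, h n y ≤ φ n y) ∧
        (∀ k, 1 ≤ k → k < n → ∀ y, h k y + φ (k + 1) y ≤ φ k y) ∧
        r = φ 1 x₀}
      (φs 1 x₀) := by
  obtain ⟨hconc, htop, hstep⟩ := isAdmissible_iterated_concaveEnvelope hn α β hb hφn hφk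
  refine ⟨⟨φs, hconc, htop, hstep, rfl⟩, ?_⟩
  rintro _ ⟨φ, hφconc, hφtop, hφstep, rfl⟩
  exact iterated_concaveEnvelope_le_of_isAdmissible hφn hφk ⟨hφconc, hφtop, hφstep⟩ 1 hn le_rfl x₀

/-- The dual value `d★ = inf φ₁(x₀)` over all admissible tuples of concave functions
(`φₙ ≥ hₙ`, `φₖ ≥ hₖ + φₖ₊₁`) is attained and equals the iterated-concave-envelope
value `φ₁★(x₀)`: i.e. `φ₁★(x₀)` is the least element of the set of admissible values. -/
theorem dual_attained_eq_iterated_concave_envelope (n : ℕ) (hn : 1 ≤ n)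
    (h : ℕ → ℝ → ℝ) (hcont : ∀ k, 1 ≤ k → k ≤ n → Continuous (h k))
    (α β : ℕ → ℝ) (hb : ∀ k, 1 ≤ k → k ≤ n → ∀ x, h k x ≤ α k + β k * x)
    (φs : ℕ → ℝ → ℝ) (hφn : φs n = concaveEnvelope (h n))
    (hφk : ∀ k, 1 ≤ k → k < n → φs k = concaveEnvelope (fun y => h k y + φs (k + 1) y))
    (x₀ : ℝ) :
    IsLeast {r : ℝ | ∃ φ : ℕ → ℝ → ℝ,
        (∀ k, 1 ≤ k → k ≤ n → ConcaveOn ℝ Set.univ (φ k)) ∧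
        (∀ y, h n y ≤ φ n y) ∧
        (∀ k, 1 ≤ k → k < n → ∀ y, h k y + φ (k + 1) y ≤ φ k y) ∧
        r = φ 1 x₀}
      (φs 1 x₀) :=
  dual_attained_eq_iterated_concave_envelope_general n hn h α β hb φs hφn hφk x₀
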